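/- arXiv:1012.5793 — 2 statements merged into one kernel-verified Lean document; each statement's English description precedes it below -/
import Mathlib

section
/- Let G be a 4-connected graph not containing K₄⁻ as a subgraph, and let H be a minimal fat 4-hammock of G. Then H is 2-connected. -/
open SimpleGraph

variable {V : Type*}

/-- `K₄⁻` (two triangles sharing the edge `ab`; the edge `cd` may be absent)
occurs as a subgraph of `G`. -/
def containsK4minus (G : SimpleGraph V) : Prop :=
  ∃ a b c d : V, a ≠ b ∧ a ≠ c ∧ a ≠ d ∧ b ≠ c ∧ b ≠ d ∧ c ≠ d ∧
    G.Adj a b ∧ G.Adj a c ∧ G.Adj a d ∧ G.Adj b c ∧ G.Adj b d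

/-- `G` contains a subdivision of `K₅`: five branch vertices joined by
pairwise internally disjoint paths. -/
def containsK5Subdivision (G : SimpleGraph V) : Prop :=
  ∃ (b : Fin 5 → V) (P : ∀ i j : Fin 5, G.Walk (b i) (b j)),
    Function.Injective b ∧
    (∀ i j, i ≠ j → (P i j).IsPath) ∧
    (∀ i j, i ≠ j → ∀ k, b k ∈ (P i j).support → k = i ∨ k = j) ∧
    (∀ i j i' j', i < j → i' < j' → (i, j) ≠ (i', j') →
      ∀ x, x ∈ (P i j).support → x ∈ (P i' j').support → x = b i ∨ x = b j)

/-- `G` has an `H`-minor (branch sets are connected, disjoint, joined by edges). -/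
def HasMinor {W : Type*} (G : SimpleGraph V) (H : SimpleGraph W) : Prop :=
  ∃ f : W → Set V,
    (∀ w, (G.induce (f w)).Connected) ∧
    (∀ w₁ w₂, w₁ ≠ w₂ → Disjoint (f w₁) (f w₂)) ∧
    (∀ w₁ w₂, H.Adj w₁ w₂ → ∃ x ∈ f w₁, ∃ y ∈ f w₂, G.Adj x y)

/-- Planarity, via Wagner's theorem: no `K₅` and no `K₃,₃` minor. -/
def IsPlanar (G : SimpleGraph V) : Prop :=
  ¬ HasMinor G (completeGraph (Fin 5)) ∧
  ¬ HasMinor G (completeBipartiteGraph (Fin 3) (Fin 3))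

/-- `G` is `k`-connected: more than `k` vertices, and removing fewer than `k`
vertices leaves a connected graph. -/
def IsKConnected (k : ℕ) (G : SimpleGraph V) : Prop :=
  k < (Set.univ : Set V).ncard ∧
  ∀ S : Set V, S.Finite → S.ncard < k → (G.induce Sᶜ).Connected

/-- Boundary of a subgraph `H` of `G`: vertices of `H` incident with an edge
of `G` not in `H`. -/
def bnd (G : SimpleGraph V) (H : G.Subgraph) : Set V :=
  {v | v ∈ H.verts ∧ ∃ w, G.Adj v w ∧ ¬ H.Adj v w}

/-- A `k`-hammock: connected subgraph with boundary of size `k`. -/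
def IsHammock (G : SimpleGraph V) (k : ℕ) (H : G.Subgraph) : Prop :=
  H.Connected ∧ (bnd G H).ncard = k

def TrivialHammock (G : SimpleGraph V) (H : G.Subgraph) : Prop :=
  H.verts = bnd G H

def DegenerateHammock (G : SimpleGraph V) (H : G.Subgraph) : Prop :=
  H.verts.ncard = (bnd G H).ncard + 1

def FatHammock (G : SimpleGraph V) (H : G.Subgraph) : Prop :=
  (bnd G H).ncard + 2 ≤ H.verts.ncard

/-- A `4`-hammock is minimal if all its proper `4`-hammocks are trivial or degenerate. -/
def Minimal4Hammock (G : SimpleGraph V) (H : G.Subgraph) : Prop :=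
  IsHammock G 4 H ∧
  ∀ H' : G.Subgraph, H' ≤ H → H' ≠ H → IsHammock G 4 H' →
    TrivialHammock G H' ∨ DegenerateHammock G H'

def MinimalFat4Hammock (G : SimpleGraph V) (H : G.Subgraph) : Prop :=
  Minimal4Hammock G H ∧ FatHammock G H

/-- The list `l` records a cycle of `G` (vertices in clockwise order). -/
def IsCycleList (G : SimpleGraph V) (l : List V) : Prop :=
  l.Nodup ∧ 3 ≤ l.length ∧
    ∀ i : Fin l.length,
      G.Adj (l.get i) (l.get ⟨((i : ℕ) + 1) % l.length, Nat.mod_lt _ i.pos⟩)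

/-- `x` and `y` are consecutive on the cyclic list `C`. -/
def CycAdj (C : List V) (x y : V) : Prop :=
  ∃ i : Fin C.length,
    (C.get i = x ∧ C.get ⟨((i : ℕ) + 1) % C.length, Nat.mod_lt _ i.pos⟩ = y) ∨
    (C.get i = y ∧ C.get ⟨((i : ℕ) + 1) % C.length, Nat.mod_lt _ i.pos⟩ = x)

/-- Clockwise (forward) distance between positions on a cycle of length `n`. -/
def cycDist (n i j : ℕ) : ℕ := (j + n - i) % n

/-- The open segment of the cycle `C` from `a` clockwise to `b`. -/
def segOpen (C : List V) (a b : V) : Set V :=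
  {x | ∃ i j k : Fin C.length, C.get i = a ∧ C.get j = b ∧ C.get k = x ∧
    k ≠ i ∧ k ≠ j ∧ cycDist C.length (i : ℕ) (k : ℕ) < cycDist C.length (i : ℕ) (j : ℕ)}

/-- The closed segment of the cycle `C` from `a` clockwise to `b`. -/
def segClosed (C : List V) (a b : V) : Set V := segOpen C a b ∪ {a, b}

/-- `a 0, a 1, a 2, a 3` appear in this clockwise order along the cycle `C`. -/
def ClockwiseOn (C : List V) (a : Fin 4 → V) : Prop :=
  ∃ p : Fin 4 → Fin C.length, (∀ j, C.get (p j) = a j) ∧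
    ∀ j k : Fin 4, j < k →
      cycDist C.length ((p 0 : Fin C.length) : ℕ) ((p j : Fin C.length) : ℕ) <
        cycDist C.length ((p 0 : Fin C.length) : ℕ) ((p k : Fin C.length) : ℕ)

/-- `x` and `y` are consecutive among the points of `S` on the cycle `C`:
one of the two open arcs between them misses `S`. -/
def ConsecutiveOn (C : List V) (S : Set V) (x y : V) : Prop :=
  segOpen C x y ∩ S = ∅ ∨ segOpen C y x ∩ S = ∅

/-- A combinatorial plane graph: a graph together with its facial cycles and a
distinguished outer face; every edge lies on exactly two faces and every vertex
on exactly `deg` faces (valid for `2`-connected plane graphs). -/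
structure PlaneGraph (V : Type*) where
  graph : SimpleGraph V
  faces : Finset (List V)
  outer : List V
  outer_mem : outer ∈ faces
  faces_cycle : ∀ f ∈ faces, IsCycleList graph f
  edge_two_faces : ∀ x y, graph.Adj x y →
    {f ∈ (faces : Set (List V)) | CycAdj f x y}.ncard = 2
  vertex_faces : ∀ v : V,
    {f ∈ (faces : Set (List V)) | v ∈ f}.ncard = (graph.neighborSet v).ncard

def Cofacial (P : PlaneGraph V) (u w : V) : Prop :=
  ∃ f ∈ P.faces, u ∈ f ∧ w ∈ f

/-- `C` is the rim of the facial wheel `S_u`: the induced cycle on the vertices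
cofacial with `u`, containing `N(u)` and separating `u` from the rest of the graph. -/
def IsFacialRim (P : PlaneGraph V) (u : V) (C : List V) : Prop :=
  IsCycleList P.graph C ∧ u ∉ C ∧
  (∀ w, w ∈ C ↔ (w ≠ u ∧ Cofacial P u w)) ∧
  P.graph.neighborSet u ⊆ {x | x ∈ C} ∧
  (∀ x ∈ C, ∀ y ∈ C, P.graph.Adj x y → CycAdj C x y) ∧
  (∀ w, w ∉ C → w ≠ u → ∀ p : P.graph.Walk u w, ∃ x ∈ p.support, x ∈ C)

/-- The facial wheel `S_u` (hub `u`, spokes, and rim `C`) is a subgraph of `H`. -/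
def WheelIn (G : SimpleGraph V) (H : G.Subgraph) (u : V) (C : List V) : Prop :=
  u ∈ H.verts ∧ (∀ x ∈ C, x ∈ H.verts) ∧
  (∀ x, G.Adj u x → H.Adj u x) ∧
  (∀ x y, CycAdj C x y → H.Adj x y)

/-- A system of `k` pairwise vertex-disjoint `(A,B)`-paths inside the subgraph `H`,
internally disjoint from `A ∪ B`. -/
structure Linkage (G : SimpleGraph V) (H : G.Subgraph) (A B : Set V) (k : ℕ) where
  s : Fin k → V
  t : Fin k → V
  walk : ∀ i, G.Walk (s i) (t i)
  isPath : ∀ i, (walk i).IsPath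
  support_mem : ∀ i, ∀ x ∈ (walk i).support, x ∈ H.verts
  edges_mem : ∀ i, ∀ e ∈ (walk i).edges, e ∈ H.edgeSet
  s_mem : ∀ i, s i ∈ A
  t_mem : ∀ i, t i ∈ B
  internal : ∀ i, ∀ x ∈ (walk i).support, x ≠ s i → x ≠ t i → x ∉ A ∧ x ∉ B
  disj : ∀ i j, i ≠ j → ∀ x ∈ (walk i).support, x ∉ (walk j).support

/-- A `C_u`-linkage: a `(bnd H, C)`-4-linkage in `H`. -/
abbrev CuLinkage (G : SimpleGraph V) (H : G.Subgraph) (C : List V) :=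
  Linkage G H (bnd G H) {x | x ∈ C} 4

/-- `α(L)`: the number of endpoints of the linkage lying in `N(u)`. -/
noncomputable def lAlpha (G : SimpleGraph V) (u : V) {H : G.Subgraph} {A B : Set V} {k : ℕ}
    (L : Linkage G H A B k) : ℕ :=
  {i : Fin k | L.t i ∈ G.neighborSet u}.ncard

/-- Data of a short wheel: the four neighbours of `u` in clockwise rim order,
two edge-disjoint triangles at `u`, and the two remaining rim segments of
order between 2 and 4, not both of order 4. -/
def ShortWheelOn (G : SimpleGraph V) (u : V) (C : List V) (n : Fin 4 → V) : Prop :=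
  ClockwiseOn C n ∧ Set.range n = G.neighborSet u ∧
  G.Adj (n 0) (n 1) ∧ G.Adj (n 2) (n 3) ∧
  (segOpen C (n 1) (n 2)).ncard ≤ 2 ∧ (segOpen C (n 3) (n 0)).ncard ≤ 2 ∧
  ¬((segOpen C (n 1) (n 2)).ncard = 2 ∧ (segOpen C (n 3) (n 0)).ncard = 2)

def IsShortWheel (G : SimpleGraph V) (u : V) (C : List V) : Prop :=
  (G.neighborSet u).ncard = 4 ∧ ∃ n, ShortWheelOn G u C n

/-- A short wheel which, if imbalanced (a segment of order 4), is proper with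
respect to the boundary set `B`: the interior of that segment avoids `B`. -/
def IsShortProperWheel (G : SimpleGraph V) (u : V) (C : List V) (B : Set V) : Prop :=
  (G.neighborSet u).ncard = 4 ∧ ∃ n, ShortWheelOn G u C n ∧
    ((segOpen C (n 1) (n 2)).ncard = 2 → segOpen C (n 1) (n 2) ∩ B = ∅) ∧
    ((segOpen C (n 3) (n 0)).ncard = 2 → segOpen C (n 3) (n 0) ∩ B = ∅)


/-! If deleting a vertex `v` disconnected `H`, let `C` and `D` be the two sides. By 4-connectivity
of `G`, a side meeting `bnd H` in at most two vertices lies inside `bnd H`; since `|bnd H| = 4` and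
`H` is fat, one side is then a single boundary vertex `a` whose only neighbour in `H` is `v`, and
`v` is interior. Now `H - a` is a proper 4-hammock with boundary `v` plus `bnd H - a`, hence
degenerate by minimality, so its unique interior vertex `w` is adjacent to `v` and to `bnd H - a`.
As `v` has degree at least 4, two of its neighbours lie in `bnd H - a`, and with `v` and `w` they
form a `K₄⁻`. -/

namespace IsKConnected

variable {G : SimpleGraph V} {k : ℕ}

theorem finite (hG : IsKConnected k G) : Finite V :=
  Set.finite_univ_iff.1 (Set.finite_of_ncard_pos (by have := hG.1; omega))

theorem subset_of_forall_adj_mem (hG : IsKConnected k G) {A T : Set V} (hT : T.ncard < k)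
    (hA : ∀ x ∈ A \ T, ∀ y, G.Adj x y → y ∈ A) {q : V} (hqA : q ∉ A) (hqT : q ∉ T) :
    A ⊆ T := by
  have := hG.finite
  intro p hp
  by_contra hpT
  obtain ⟨w⟩ := (hG.2 T T.toFinite hT).preconnected ⟨p, hpT⟩ ⟨q, hqT⟩
  obtain ⟨d, -, hd₁, hd₂⟩ := w.exists_boundary_dart {x : ↥Tᶜ | (x : V) ∈ A} hp hqA
  exact hd₂ (hA _ ⟨hd₁, d.fst.2⟩ _ d.adj)

theorem le_ncard_neighborSet (hG : IsKConnected k G) (x : V) : k ≤ (G.neighborSet x).ncard := by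
  have := hG.finite
  by_contra! hlt
  have hcard : (insert x (G.neighborSet x)).ncard < (Set.univ : Set V).ncard :=
    (Set.ncard_insert_le x _).trans_lt (by have := hG.1; omega)
  obtain ⟨q, -, hq⟩ := Set.exists_mem_notMem_of_ncard_lt_ncard hcard
  have hsub := hG.subset_of_forall_adj_mem hlt (A := insert x (G.neighborSet x))
    (fun y hy z hz => by
      rcases hy with ⟨rfl | hy, hyN⟩
      · exact Set.mem_insert_of_mem _ hz
      · exact absurd hy hyN)
    hq (fun h => hq (Set.mem_insert_of_mem _ h))
  exact G.loopless.irrefl x (hsub (Set.mem_insert x _))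

end IsKConnected

theorem commonNeighbors_subsingleton {G : SimpleGraph V} (hG : ¬ containsK4minus G) {x y : V}
    (hxy : G.Adj x y) : (G.commonNeighbors x y).Subsingleton := by
  intro c hc d hd
  by_contra hcd
  rw [mem_commonNeighbors] at hc hd
  exact hG ⟨x, y, c, d, hxy.ne, hc.1.ne, hd.1.ne, hc.2.ne, hd.2.ne, hcd,
    hxy, hc.1, hd.1, hc.2, hd.2⟩

namespace SimpleGraph.Subgraph

variable {G : SimpleGraph V}

theorem connected_induce_compl_iff {H : G.Subgraph} (S : Set H.verts) :
    (H.coe.induce Sᶜ).Connected ↔ (H.deleteVerts (Subtype.val '' S)).Connected := by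
  have hS : {v : H.verts | (v : V) ∉ Subtype.val '' S} = Sᶜ := by
    ext v
    simp [Subtype.val_injective.mem_set_image]
  rw [Subgraph.connected_iff', (H.coeDeleteVertsIso _).connected_iff, hS]

structure IsSeparation (K : G.Subgraph) (C D : Set V) : Prop where
  nonempty_left : C.Nonempty
  nonempty_right : D.Nonempty
  disjoint : Disjoint C D
  union_eq : C ∪ D = K.verts
  not_adj : ∀ x ∈ C, ∀ y ∈ D, ¬ K.Adj x y

theorem IsSeparation.symm {K : G.Subgraph} {C D : Set V} (h : K.IsSeparation C D) :
    K.IsSeparation D C where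
  nonempty_left := h.nonempty_right
  nonempty_right := h.nonempty_left
  disjoint := h.disjoint.symm
  union_eq := Set.union_comm C D ▸ h.union_eq
  not_adj x hx y hy hxy := h.not_adj y hy x hx hxy.symm

theorem exists_isSeparation_of_not_preconnected {K : G.Subgraph} (hK : ¬ K.Preconnected) :
    ∃ C D, K.IsSeparation C D := by
  obtain ⟨u, v, huv⟩ : ∃ u v, ¬ K.coe.Reachable u v := by
    simpa [Subgraph.preconnected_iff, Preconnected] using hK
  set C := Subtype.val '' {x | K.coe.Reachable u x}
  refine ⟨C, K.verts \ C, ⟨u, u, Reachable.refl _, rfl⟩, ⟨v, v.2, ?_⟩, Set.disjoint_sdiff_right,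
    ?_, ?_⟩
  · rintro ⟨w, hw, hwv⟩
    exact huv (Subtype.ext hwv ▸ hw)
  · exact Set.union_sdiff_cancel (by rintro _ ⟨x, -, rfl⟩; exact x.2)
  · rintro _ ⟨x, hx, rfl⟩ y ⟨hy, hyC⟩ hxy
    exact hyC ⟨⟨y, hy⟩, hx.trans (Adj.reachable (G := K.coe) hxy), rfl⟩

theorem connected_deleteVerts_of_forall_adj_eq [Finite V] {H : G.Subgraph} (hH : H.Connected)
    {a v : V} (hav : H.Adj a v) (ha : ∀ y, H.Adj a y → y = v) :
    (H.deleteVerts {a}).Connected := by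
  let := Fintype.ofFinite (H.coe.neighborSet ⟨a, hav.fst_mem⟩)
  have hdeg : H.coe.degree ⟨a, hav.fst_mem⟩ = 1 := by
    rw [SimpleGraph.degree_eq_one_iff_existsUnique_adj]
    exact ⟨⟨v, hav.snd_mem⟩, hav, fun y hy => Subtype.ext (ha y hy)⟩
  simpa using (connected_induce_compl_iff {⟨a, hav.fst_mem⟩}).1
    (hH.coe.induce_compl_singleton_of_degree_eq_one hdeg)

end SimpleGraph.Subgraph

section Hammock

variable {G : SimpleGraph V} {H : G.Subgraph}

theorem adj_of_notMem_bnd {x y : V} (hx : x ∈ H.verts) (hxB : x ∉ bnd G H) (hxy : G.Adj x y) :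
    H.Adj x y := by
  by_contra h
  exact hxB ⟨hx, y, hxy, h⟩

theorem bnd_deleteVerts_of_forall_adj_eq {a v : V} (hav : H.Adj a v)
    (ha : ∀ y, H.Adj a y → y = v) :
    bnd G (H.deleteVerts {a}) = insert v (bnd G H \ {a}) := by
  ext x
  simp only [bnd, Subgraph.deleteVerts_verts, Subgraph.deleteVerts_adj, Set.mem_ofPred_eq,
    Set.mem_insert_iff, Set.mem_sdiff, Set.mem_singleton_iff]
  constructor
  · rintro ⟨⟨hx, hxa⟩, y, hxy, hy⟩
    by_cases hxv : x = v
    · exact Or.inl hxv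
    refine Or.inr ⟨⟨hx, y, hxy, fun hHxy => hy ⟨hx, hxa, hHxy.snd_mem, ?_, hHxy⟩⟩, hxa⟩
    rintro rfl
    exact hxv (ha x hHxy.symm)
  · rintro (rfl | ⟨⟨hx, y, hxy, hy⟩, hxa⟩)
    · exact ⟨⟨hav.snd_mem, hav.ne.symm⟩, a, hav.adj_sub.symm, fun h => h.2.2.2.1 rfl⟩
    · exact ⟨⟨hx, hxa⟩, y, hxy, fun h => hy h.2.2.2.2⟩

theorem IsHammock.deleteVerts_of_forall_adj_eq [Finite V] {k : ℕ} (hH : IsHammock G k H)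
    {a v : V} (ha : a ∈ bnd G H) (hv : v ∉ bnd G H) (hav : H.Adj a v)
    (hpend : ∀ y, H.Adj a y → y = v) : IsHammock G k (H.deleteVerts {a}) := by
  refine ⟨Subgraph.connected_deleteVerts_of_forall_adj_eq hH.1 hav hpend, ?_⟩
  have := Set.ncard_sdiff_singleton_add_one ha
  have := hH.2
  rw [bnd_deleteVerts_of_forall_adj_eq hav hpend, Set.ncard_insert_of_notMem fun h => hv h.1]
  omega

theorem DegenerateHammock.exists_verts_eq_insert [Finite V] (h : DegenerateHammock G H) :
    ∃ w ∉ bnd G H, H.verts = insert w (bnd G H) ∧ G.neighborSet w ⊆ bnd G H := by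
  have hsub : bnd G H ⊆ H.verts := fun x hx => hx.1
  obtain ⟨w, hw, hwB⟩ := Set.exists_mem_notMem_of_ncard_lt_ncard
    (show (bnd G H).ncard < H.verts.ncard by rw [h]; omega)
  have hverts : H.verts = insert w (bnd G H) :=
    (Set.eq_of_subset_of_ncard_le (Set.insert_subset hw hsub)
      (by rw [Set.ncard_insert_of_notMem hwB, h])).symm
  refine ⟨w, hwB, hverts, fun y hy => ?_⟩
  have hy' := (adj_of_notMem_bnd hw hwB hy).snd_mem
  rw [hverts] at hy'
  exact hy'.resolve_left (G.ne_of_adj hy).symm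

/-- Otherwise `(bnd H ∩ C) ∪ S` would separate an interior vertex of `C` from `D` in `G`. -/
theorem subset_bnd_of_isSeparation {k : ℕ} (hG : IsKConnected k G) {S C D : Set V}
    (hCD : (H.deleteVerts S).IsSeparation C D) (hk : (bnd G H ∩ C).ncard + S.ncard < k) :
    C ⊆ bnd G H := by
  have := hG.finite
  have hC : C ⊆ H.verts \ S := Set.subset_union_left.trans hCD.union_eq.subset
  have hD : D ⊆ H.verts \ S := Set.subset_union_right.trans hCD.union_eq.subset
  obtain ⟨q, hq⟩ := hCD.nonempty_right
  have hqC : q ∉ C := Set.disjoint_right.1 hCD.disjoint hq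
  have hqS : q ∉ S := (hD hq).2
  have hclosed : ∀ x ∈ (C ∪ S) \ (bnd G H ∩ C ∪ S), ∀ y, G.Adj x y → y ∈ C ∪ S := by
    rintro x ⟨hxCS, hxT⟩ y hxy
    have hxS : x ∉ S := fun h => hxT (Or.inr h)
    have hxC : x ∈ C := hxCS.resolve_right hxS
    have hHxy := adj_of_notMem_bnd (hC hxC).1 (fun h => hxT (Or.inl ⟨h, hxC⟩)) hxy
    by_cases hyS : y ∈ S
    · exact Or.inr hyS
    have hy : y ∈ C ∪ D := hCD.union_eq ▸ ⟨hHxy.snd_mem, hyS⟩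
    refine Or.inl (hy.resolve_right fun hyD => hCD.not_adj x hxC y hyD ?_)
    exact Subgraph.deleteVerts_adj.2 ⟨(hC hxC).1, hxS, hHxy.snd_mem, hyS, hHxy⟩
  have hT : (bnd G H ∩ C ∪ S).ncard < k := (Set.ncard_union_le _ _).trans_lt hk
  have hsub := hG.subset_of_forall_adj_mem hT hclosed (fun h => h.elim hqC hqS)
    (fun h => h.elim (fun h' => hqC h'.2) hqS)
  intro x hx
  exact ((hsub (Or.inl hx)).resolve_right (hC hx).2).1

namespace MinimalFat4Hammock

theorem six_le_ncard_verts (hH : MinimalFat4Hammock G H) : 6 ≤ H.verts.ncard := by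
  have := hH.2
  rw [FatHammock, hH.1.1.2] at this
  exact this

theorem exists_adj_ne_of_adj (hH : MinimalFat4Hammock G H) (hG : IsKConnected 4 G)
    (hK : ¬ containsK4minus G) {a v : V} (ha : a ∈ bnd G H) (hv : v ∉ bnd G H)
    (hav : H.Adj a v) : ∃ y, H.Adj a y ∧ y ≠ v := by
  have := hG.finite
  by_contra! hpend
  have hH' := hH.1.1.deleteVerts_of_forall_adj_eq ha hv hav hpend
  have hbnd := bnd_deleteVerts_of_forall_adj_eq hav hpend
  have hdeg : DegenerateHammock G (H.deleteVerts {a}) := by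
    have hne : H.deleteVerts {a} ≠ H := fun h => by
      simpa [ha.1] using congrArg (fun K : G.Subgraph => a ∈ K.verts) h
    refine (hH.1.2 _ Subgraph.deleteVerts_le hne hH').resolve_left fun htriv => ?_
    have := congrArg Set.ncard htriv
    rw [hH'.2, Subgraph.deleteVerts_verts] at this
    have := Set.ncard_sdiff_singleton_add_one ha.1
    have := hH.six_le_ncard_verts
    omega
  obtain ⟨w, -, hverts, hNw⟩ := hdeg.exists_verts_eq_insert
  have hNw : G.neighborSet w = insert v (bnd G H \ {a}) :=
    hbnd ▸ Set.eq_of_subset_of_ncard_le hNw (hH'.2 ▸ hG.le_ncard_neighborSet w)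
  have hvw : G.Adj v w := (show v ∈ G.neighborSet w from hNw ▸ Set.mem_insert v _).symm
  have hNv : G.neighborSet v ⊆ {a, w} ∪ G.commonNeighbors v w := by
    intro y hvy
    by_cases hya : y = a
    · exact Or.inl (Or.inl hya)
    have hy : y ∈ (H.deleteVerts {a}).verts :=
      ⟨(adj_of_notMem_bnd hav.snd_mem hv hvy).snd_mem, hya⟩
    rw [hverts, hbnd] at hy
    rcases hy with rfl | hy
    · exact Or.inl (Or.inr rfl)
    · exact Or.inr ⟨hvy, show y ∈ G.neighborSet w from hNw ▸ hy⟩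
  have := Set.ncard_le_one_iff_subsingleton.2 (commonNeighbors_subsingleton hK hvw)
  have := (Set.ncard_le_ncard hNv).trans (Set.ncard_union_le _ _)
  have := Set.ncard_singleton w ▸ Set.ncard_insert_le a {w}
  have := hG.le_ncard_neighborSet v
  omega

theorem ncard_bnd_inter_lt_three (hH : MinimalFat4Hammock G H) (hG : IsKConnected 4 G)
    (hK : ¬ containsK4minus G) {v : V} {C D : Set V}
    (hCD : (H.deleteVerts {v}).IsSeparation C D) (hC : C ⊆ bnd G H) :
    (bnd G H ∩ D).ncard < 3 := by
  have := hG.finite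
  by_contra! hD
  have hcard := Set.ncard_union_eq (hCD.disjoint.mono_right (Set.inter_subset_right (s := bnd G H)))
  have hunion : C ∪ (bnd G H ∩ D) ⊆ bnd G H := Set.union_subset hC Set.inter_subset_left
  have hvCD : v ∉ C ∪ D := fun h => (hCD.union_eq.subset h).2 rfl
  have hB := hH.1.1.2
  have := hCD.nonempty_left.ncard_pos
  have hv : v ∉ bnd G H := fun hv => by
    have := Set.ncard_le_ncard (Set.insert_subset hv hunion)
    have := Set.ncard_insert_of_notMem (s := C ∪ bnd G H ∩ D) fun h => hvCD (h.imp id And.right)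
    omega
  have := Set.ncard_le_ncard hunion
  obtain ⟨a, rfl⟩ := Set.ncard_eq_one.1 (show C.ncard = 1 by omega)
  have hav : a ≠ v := fun h => hvCD (Or.inl h.symm)
  have ha : ∀ y, H.Adj a y → y = v := by
    intro y hay
    by_contra hyv
    have hy : y ∈ ({a} : Set V) ∪ D := hCD.union_eq ▸ ⟨hay.snd_mem, hyv⟩
    rcases hy with rfl | hyD
    · exact hay.adj_sub.ne rfl
    · exact hCD.not_adj a rfl y hyD
        (Subgraph.deleteVerts_adj.2 ⟨hay.fst_mem, hav, hay.snd_mem, hyv, hay⟩)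
  have : Nontrivial H.verts := by
    rw [Set.nontrivial_coe_sort, ← Set.one_lt_ncard_iff_nontrivial]
    have := hH.six_le_ncard_verts
    omega
  obtain ⟨u, hau⟩ := hH.1.1.1.preconnected.exists_adj_of_nontrivial ⟨a, (hC rfl).1⟩
  obtain ⟨y, hay, hyv⟩ := hH.exists_adj_ne_of_adj hG hK (hC rfl) hv (ha u hau ▸ hau)
  exact hyv (ha y hay)

theorem connected_deleteVerts_singleton (hH : MinimalFat4Hammock G H) (hG : IsKConnected 4 G)
    (hK : ¬ containsK4minus G) (v : V) : (H.deleteVerts {v}).Connected := by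
  have := hG.finite
  have hB := hH.1.1.2
  have h6 := hH.six_le_ncard_verts
  obtain ⟨u, hu, huv⟩ := Set.exists_ne_of_one_lt_ncard (show 1 < H.verts.ncard by omega) v
  refine Subgraph.connected_iff.2 ⟨by_contra fun hpre => ?_, u, hu, huv⟩
  obtain ⟨C, D, hCD⟩ := Subgraph.exists_isSeparation_of_not_preconnected hpre
  have hsub : ∀ {C D}, (H.deleteVerts {v}).IsSeparation C D →
      3 ≤ (bnd G H ∩ C).ncard ∨ C ⊆ bnd G H := fun hCD =>
    or_iff_not_imp_left.2 fun h =>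
      subset_bnd_of_isSeparation hG hCD (by rw [Set.ncard_singleton]; omega)
  rcases hsub hCD, hsub hCD.symm with ⟨hC | hC, hD | hD⟩
  · have hdisj : Disjoint (bnd G H ∩ C) (bnd G H ∩ D) :=
      hCD.disjoint.mono Set.inter_subset_right Set.inter_subset_right
    have := Set.ncard_le_ncard (show bnd G H ∩ C ∪ bnd G H ∩ D ⊆ bnd G H from
      Set.union_subset Set.inter_subset_left Set.inter_subset_left)
    rw [Set.ncard_union_eq hdisj] at this
    omega
  · exact (hH.ncard_bnd_inter_lt_three hG hK hCD.symm hD).not_ge (Set.inter_comm _ _ ▸ hC)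
  · exact (hH.ncard_bnd_inter_lt_three hG hK hCD hC).not_ge hD
  · have hverts : H.verts ⊆ insert v (bnd G H) := fun x hx => by
      by_cases hxv : x = v
      · exact Or.inl hxv
      · exact Or.inr ((hCD.union_eq.symm.subset ⟨hx, hxv⟩).elim (@hC x) (@hD x))
    have := (Set.ncard_le_ncard hverts).trans (Set.ncard_insert_le _ _)
    omega

end MinimalFat4Hammock

end Hammock

theorem stmt3_general {V : Type*} (G : SimpleGraph V)
    (h4 : IsKConnected 4 G) (hk4 : ¬ containsK4minus G)
    (H : G.Subgraph) (hH : MinimalFat4Hammock G H) :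
    IsKConnected 2 H.coe := by
  have := h4.finite
  have h6 := hH.six_le_ncard_verts
  refine ⟨by rw [Set.ncard_univ, Nat.card_coe_set_eq]; omega, fun S _ hS => ?_⟩
  rw [Subgraph.connected_induce_compl_iff]
  obtain rfl | ⟨v, rfl⟩ := (Set.ncard_le_one_iff_eq S.toFinite).1 (show S.ncard ≤ 1 by omega)
  · simpa using hH.1.1.1
  · simpa using hH.connected_deleteVerts_singleton h4 hk4 v

/-- A minimal fat 4-hammock of a 4-connected graph with no `K₄⁻`
subgraph is 2-connected. -/
theorem stmt3 {V : Type*} [Fintype V] (G : SimpleGraph V)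
    (h4 : IsKConnected 4 G) (hk4 : ¬ containsK4minus G)
    (H : G.Subgraph) (hH : MinimalFat4Hammock G H) :
    IsKConnected 2 H.coe :=
  stmt3_general G h4 hk4 H hH
end

section
/- Let G be a 5-connected graph and let v be a vertex of G such that G − v has a 4-valent vertex u. If both 4-hammocks of G − v with boundary N_{G−v}(u) are degenerate, then G has exactly 7 vertices, and G contains a subdivision of K₅. -/
open SimpleGraph

variable {V : Type*}

/-! Since the hammock on `V(G - v) \ {u}` is degenerate with a boundary of size four, `G` has
seven vertices. A `5`-connected graph has minimum degree at least `5`, so on seven vertices each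
vertex misses at most one other vertex. Choose a pair `b₀, b₁` that is adjacent to every other
vertex (a non-adjacent pair if there is one), a triangle `b₂ b₃ b₄` among the remaining five
vertices, and one more vertex `w`: joining `b₀` and `b₁` through `w` and all other branch vertices
by edges gives a subdivided `K₅`. -/

theorem IsKConnected.le_ncard_neighborSet_s14 [Finite V] {k : ℕ} {G : SimpleGraph V}
    (hG : IsKConnected k G) (x : V) : k ≤ (G.neighborSet x).ncard := by
  by_contra! hlt
  have hx : x ∈ (G.neighborSet x)ᶜ := by simp
  have : Nontrivial ((G.neighborSet x)ᶜ : Set V) := by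
    rw [Set.nontrivial_coe_sort, ← Set.one_lt_ncard_iff_nontrivial, Set.ncard_compl]
    have := hG.1
    rw [Set.ncard_univ] at this
    omega
  obtain ⟨y, hy⟩ :=
    (hG.2 _ (Set.toFinite _) hlt).preconnected.exists_adj_of_nontrivial ⟨x, hx⟩
  exact y.2 (by simpa using hy)

theorem IsHammock.card_eq_of_verts_eq_compl_singleton [Finite V] {G : SimpleGraph V} {k : ℕ}
    {H : G.Subgraph} {u : V} (hH : IsHammock G k H) (hverts : H.verts = Set.univ \ {u})
    (hdegen : DegenerateHammock G H) : Nat.card V = k + 2 := by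
  have hk : ({u}ᶜ : Set V).ncard = k + 1 := by
    rw [Set.compl_eq_univ_sdiff, ← hverts, hdegen, hH.2]
  rw [Set.ncard_compl, Set.ncard_singleton] at hk
  have : Nonempty V := ⟨u⟩
  have := Nat.card_pos (α := V)
  omega

namespace SimpleGraph

variable {G : SimpleGraph V}

theorem eq_of_not_adj_of_not_adj [Finite V] {x y z : V}
    (hdeg : Nat.card V ≤ (G.neighborSet x).ncard + 2) (hy : y ≠ x) (hz : z ≠ x)
    (hxy : ¬G.Adj x y) (hxz : ¬G.Adj x z) : y = z := by
  by_contra hyz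
  have hsub : G.neighborSet x ⊆ {x, y, z}ᶜ := by
    rintro w hw (rfl | rfl | rfl)
    exacts [G.irrefl hw, hxy hw, hxz hw]
  have h3 : ({x, y, z} : Set V).ncard = 3 :=
    Set.ncard_eq_three.2 ⟨x, y, z, hy.symm, hz.symm, hyz, rfl⟩
  have := Set.ncard_le_ncard hsub
  have := Set.ncard_le_card ({x, y, z} : Set V)
  rw [Set.ncard_compl, h3] at *
  omega

theorem exists_forall_adj_of_ne_of_ne [Finite V]
    (hdeg : ∀ x, Nat.card V ≤ (G.neighborSet x).ncard + 2) (x : V) :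
    ∃ y, ∀ z, z ≠ x → z ≠ y → G.Adj x z := by
  by_cases h : ∃ y, y ≠ x ∧ ¬G.Adj x y
  · obtain ⟨y, hyx, hxy⟩ := h
    exact ⟨y, fun z hzx hzy =>
      by_contra fun hxz => hzy (eq_of_not_adj_of_not_adj (hdeg x) hzx hyx hxz hxy)⟩
  · push Not at h
    exact ⟨x, fun z hzx _ => h z hzx⟩

theorem exists_pair_ne_forall_adj_of_ne_of_ne [Finite V] [Nontrivial V]
    (hdeg : ∀ x, Nat.card V ≤ (G.neighborSet x).ncard + 2) :
    ∃ b₀ b₁, b₀ ≠ b₁ ∧ ∀ z, z ≠ b₀ → z ≠ b₁ → G.Adj b₀ z ∧ G.Adj b₁ z := by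
  by_cases h : ∃ x y, x ≠ y ∧ ¬G.Adj x y
  · obtain ⟨x, y, hxy, hn⟩ := h
    refine ⟨x, y, hxy, fun z hzx hzy => ⟨?_, ?_⟩⟩
    · by_contra hxz
      exact hzy (eq_of_not_adj_of_not_adj (hdeg x) hxy.symm hzx hn hxz).symm
    · by_contra hyz
      exact hzx (eq_of_not_adj_of_not_adj (hdeg y) hxy hzy (hn ·.symm) hyz).symm
  · push Not at h
    obtain ⟨x, y, hxy⟩ := exists_pair_ne V
    exact ⟨x, y, hxy, fun z hzx hzy => ⟨h x z hzx.symm, h y z hzy.symm⟩⟩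

theorem containsK5Subdivision_of_adj_of_detour (b : Fin 5 → V) (w : V)
    (h₀₁ : b 0 ≠ b 1) (hw : ∀ k, w ≠ b k)
    (hw₀ : G.Adj (b 0) w) (hw₁ : G.Adj (b 1) w)
    (hadj : ∀ i j, i < j → s(i, j) ≠ s(0, 1) → G.Adj (b i) (b j)) :
    containsK5Subdivision G := by
  classical
  have hadj' : ∀ i j, i ≠ j → s(i, j) ≠ s(0, 1) → G.Adj (b i) (b j) := by
    intro i j hij hd
    rcases hij.lt_or_gt with h | h
    · exact hadj i j h hd
    · exact (hadj j i h (by rwa [Sym2.eq_swap])).symm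
  have hb : Function.Injective b := by
    intro i j h
    by_contra hij
    by_cases hd : s(i, j) = s(0, 1)
    · rcases Sym2.eq_iff.1 hd with ⟨rfl, rfl⟩ | ⟨rfl, rfl⟩
      exacts [h₀₁ h, h₀₁ h.symm]
    · exact (hadj' i j hij hd).ne h
  have hdetour : ∀ i j, s(i, j) = s(0, 1) → G.Adj (b i) w ∧ G.Adj w (b j) := by
    intro i j h
    rcases Sym2.eq_iff.1 h with ⟨rfl, rfl⟩ | ⟨rfl, rfl⟩
    exacts [⟨hw₀, hw₁.symm⟩, ⟨hw₁, hw₀.symm⟩]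
  let P : ∀ i j, G.Walk (b i) (b j) := fun i j =>
    if hij : i = j then Walk.nil.copy rfl (congrArg b hij)
    else if hd : s(i, j) = s(0, 1) then .cons (hdetour i j hd).1 (.cons (hdetour i j hd).2 .nil)
    else .cons (hadj' i j hij hd) .nil
  have hsupp : ∀ i j, i ≠ j → (P i j).support =
      if s(i, j) = s(0, 1) then [b i, w, b j] else [b i, b j] := by
    intro i j hij
    by_cases hd : s(i, j) = s(0, 1) <;>
      simp only [P, hd, dif_neg hij, dite_true, dite_false, if_true, if_false,
        Walk.support_cons, Walk.support_nil]
  have hmem : ∀ i j, i ≠ j → ∀ x, x ∈ (P i j).support ↔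
      x = b i ∨ x = b j ∨ x = w ∧ s(i, j) = s(0, 1) := by
    intro i j hij x
    rw [hsupp i j hij]
    split_ifs with hd <;> simp [hd, or_comm, or_left_comm]
  have hpair : ∀ i j : Fin 5, i < j → s(i, j) = s(0, 1) → (i, j) = (0, 1) := by
    intro i j h hd
    rcases Sym2.eq_iff.1 hd with ⟨rfl, rfl⟩ | ⟨rfl, rfl⟩
    exacts [rfl, absurd h (by decide)]
  refine ⟨b, P, hb, fun i j hij => ?_, fun i j hij k hk => ?_,
    fun i j i' j' hij hij' hne x hx hx' => ?_⟩
  · rw [Walk.isPath_def, hsupp i j hij]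
    split_ifs <;> simp [hb.ne hij, hw, (hw _).symm]
  · rcases (hmem i j hij _).1 hk with h | h | ⟨h, -⟩
    exacts [.inl (hb h), .inr (hb h), absurd h.symm (hw k)]
  · rcases (hmem i j hij.ne x).1 hx with h | h | ⟨hxw, hd⟩
    · exact .inl h
    · exact .inr h
    · rw [hxw] at hx'
      have hd' : s(i', j') = s(0, 1) := by
        rcases (hmem i' j' hij'.ne w).1 hx' with h | h | ⟨-, h⟩
        exacts [absurd h (hw i'), absurd h (hw j'), h]
      exact absurd ((hpair i j hij hd).trans (hpair i' j' hij' hd').symm) hne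

theorem containsK5Subdivision_of_card_le_ncard_neighborSet_add_two [Finite V]
    (hV : 7 ≤ Nat.card V) (hdeg : ∀ x, Nat.card V ≤ (G.neighborSet x).ncard + 2) :
    containsK5Subdivision G := by
  classical
  have := Fintype.ofFinite V
  have hfresh : ∀ F : Finset V, F.card ≤ 6 → ∃ y, y ∉ F := fun F hF => by
    obtain ⟨y, -, hy⟩ := Finset.exists_mem_notMem_of_card_lt_card (s := F) (t := Finset.univ)
      (by rw [Finset.card_univ, ← Nat.card_eq_fintype_card]; omega)
    exact ⟨y, hy⟩
  have : Nontrivial V := Finite.one_lt_card_iff_nontrivial.1 (by omega)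
  obtain ⟨b₀, b₁, h₀₁, hdom⟩ := exists_pair_ne_forall_adj_of_ne_of_ne hdeg
  choose partner hpartner using exists_forall_adj_of_ne_of_ne hdeg
  obtain ⟨b₂, hb₂⟩ := hfresh {b₀, b₁} (Finset.card_le_two.trans (by norm_num))
  obtain ⟨b₃, hb₃⟩ := hfresh {b₀, b₁, b₂, partner b₂} (Finset.card_le_four.trans (by norm_num))
  obtain ⟨b₄, hb₄⟩ := hfresh {b₀, b₁, b₂, b₃, partner b₂, partner b₃} Finset.card_le_six
  obtain ⟨w, hw⟩ := hfresh {b₀, b₁, b₂, b₃, b₄} (Finset.card_le_five.trans (by norm_num))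
  simp only [Finset.mem_insert, Finset.mem_singleton, not_or] at hb₂ hb₃ hb₄ hw
  obtain ⟨h₀₂, h₁₂⟩ := hdom b₂ hb₂.1 hb₂.2
  obtain ⟨h₀₃, h₁₃⟩ := hdom b₃ hb₃.1 hb₃.2.1
  obtain ⟨h₀₄, h₁₄⟩ := hdom b₄ hb₄.1 hb₄.2.1
  have h₂₃ := hpartner b₂ b₃ hb₃.2.2.1 hb₃.2.2.2
  have h₂₄ := hpartner b₂ b₄ hb₄.2.2.1 hb₄.2.2.2.2.1
  have h₃₄ := hpartner b₃ b₄ hb₄.2.2.2.1 hb₄.2.2.2.2.2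
  refine containsK5Subdivision_of_adj_of_detour ![b₀, b₁, b₂, b₃, b₄] w h₀₁ ?_
    (hdom w hw.1 hw.2.1).1 (hdom w hw.1 hw.2.1).2 ?_
  · simpa [Fin.forall_fin_succ] using hw
  · intro i j hij hne
    fin_cases i <;> fin_cases j <;>
      first | exact absurd hij (by decide) | exact absurd rfl hne | assumption

end SimpleGraph

theorem stmt14_general {V : Type*} [Fintype V] (G : SimpleGraph V)
    (h5 : IsKConnected 5 G) (v : V) (u : ({v}ᶜ : Set V))
    (H₂ : (G.induce ({v}ᶜ : Set V)).Subgraph)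
    (hH₂ : IsHammock (G.induce ({v}ᶜ : Set V)) 4 H₂)
    (hv₂ : H₂.verts = Set.univ \ {u})
    (hd₂ : DegenerateHammock (G.induce ({v}ᶜ : Set V)) H₂) :
    Fintype.card V = 7 ∧ containsK5Subdivision G := by
  have hcard : Fintype.card V = 7 := by
    have h6 := hH₂.card_eq_of_verts_eq_compl_singleton hv₂ hd₂
    rw [Nat.card_coe_set_eq, Set.ncard_compl, Set.ncard_singleton,
      Nat.card_eq_fintype_card] at h6
    have := Fintype.card_pos_iff.2 ⟨v⟩
    omega
  refine ⟨hcard, G.containsK5Subdivision_of_card_le_ncard_neighborSet_add_two ?_ fun x => ?_⟩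
  · rw [Nat.card_eq_fintype_card, hcard]
  · have := h5.le_ncard_neighborSet_s14 x
    rw [Nat.card_eq_fintype_card, hcard]
    omega

/-- If both 4-hammocks of `G - v` with boundary `N(u)` are
degenerate (for a 4-valent `u`), then `G` has exactly 7 vertices and contains
a subdivision of `K₅`. -/
theorem stmt14 {V : Type*} [Fintype V] (G : SimpleGraph V)
    (h5 : IsKConnected 5 G) (v : V) (u : ({v}ᶜ : Set V))
    (hdeg : ((G.induce ({v}ᶜ : Set V)).neighborSet u).ncard = 4)
    (H₁ H₂ : (G.induce ({v}ᶜ : Set V)).Subgraph)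
    (hH₁ : IsHammock (G.induce ({v}ᶜ : Set V)) 4 H₁)
    (hH₂ : IsHammock (G.induce ({v}ᶜ : Set V)) 4 H₂)
    (hb₁ : bnd (G.induce ({v}ᶜ : Set V)) H₁ = (G.induce ({v}ᶜ : Set V)).neighborSet u)
    (hb₂ : bnd (G.induce ({v}ᶜ : Set V)) H₂ = (G.induce ({v}ᶜ : Set V)).neighborSet u)
    (hv₁ : H₁.verts = insert u ((G.induce ({v}ᶜ : Set V)).neighborSet u))
    (hv₂ : H₂.verts = Set.univ \ {u})
    (hd₁ : DegenerateHammock (G.induce ({v}ᶜ : Set V)) H₁)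
    (hd₂ : DegenerateHammock (G.induce ({v}ᶜ : Set V)) H₂) :
    Fintype.card V = 7 ∧ containsK5Subdivision G :=
  stmt14_general G h5 v u H₂ hH₂ hv₂ hd₂
end
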